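/- arXiv:2106.02030 — 2 statements merged into one kernel-verified Lean document; each statement's English description precedes it below -/
import Mathlib

section
/- For the upper nominal trajectory with w = 1 and v ≤ v_up, h_U(t) = (a_up/2)t² + v·t for 0 ≤ t < T_up = (v_up - v)/a_up and h_U(t) = v_up·t - (v_up - v)²/(2a_up) for t ≥ T_up, any trajectory g with g(0) = 0 and g'(t) ≤ min(v + a_up·t, max(v_up, v)) for all t ≥ 0 satisfies g(t) ≤ h_U(t) for all t ≥ 0. -/
/-!
Both pieces of `h_U` are obtained by comparison of derivatives: on `[0, ∞)` the bound
`g' ≤ v + a_up t` gives `g ≤ a_up t² / 2 + v t`, and from the switching time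
`T_up = (v_up - v) / a_up ≥ 0` on, where the parabola and the line `v_up t - (v_up - v)² / (2 a_up)`
meet, the bound `g' ≤ v_up` keeps `g` below that line.
-/

open Set

theorem le_of_deriv_le_of_le_left {f g : ℝ → ℝ} {a x : ℝ} (hf : Differentiable ℝ f)
    (hg : Differentiable ℝ g) (ha : f a ≤ g a) (hderiv : ∀ y, a < y → deriv f y ≤ deriv g y)
    (hx : a ≤ x) : f x ≤ g x := by
  have hmono : MonotoneOn (g - f) (Ici a) := by
    refine monotoneOn_of_deriv_nonneg (convex_Ici a) (hg.sub hf).continuous.continuousOn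
      (hg.sub hf).differentiableOn fun y hy => ?_
    rw [interior_Ici] at hy
    rw [deriv_sub (hg y) (hf y)]
    exact sub_nonneg.mpr (hderiv y hy)
  have := hmono self_mem_Ici hx hx
  simp only [Pi.sub_apply] at this
  linarith

theorem hasDerivAt_quadratic (a v t : ℝ) :
    HasDerivAt (fun s => a / 2 * s ^ 2 + v * s) (v + a * t) t := by
  have := ((hasDerivAt_pow 2 t).const_mul (a / 2)).add ((hasDerivAt_id t).const_mul v)
  exact this.congr_deriv (by norm_num; ring)

theorem hasDerivAt_affine (w c t : ℝ) : HasDerivAt (fun s => w * s - c) w t := by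
  simpa using ((hasDerivAt_id t).const_mul w).sub_const c

theorem quadratic_eq_linear_at_switch {a v w : ℝ} (ha : a ≠ 0) :
    a / 2 * ((w - v) / a) ^ 2 + v * ((w - v) / a)
      = w * ((w - v) / a) - (w - v) ^ 2 / (2 * a) := by
  field_simp
  ring

theorem stmt9 (a_up v v_up : ℝ) (ha : 0 < a_up) (hv : v ≤ v_up)
    (hU g : ℝ → ℝ)
    (hUdef : ∀ t, hU t = if t < (v_up - v) / a_up then a_up / 2 * t ^ 2 + v * t
                         else v_up * t - (v_up - v) ^ 2 / (2 * a_up))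
    (hg : Differentiable ℝ g) (hg0 : g 0 = 0)
    (hg' : ∀ t, 0 ≤ t → deriv g t ≤ min (v + a_up * t) v_up) :
    ∀ t, 0 ≤ t → g t ≤ hU t := by
  set T := (v_up - v) / a_up
  have hquad : ∀ t, 0 ≤ t → g t ≤ a_up / 2 * t ^ 2 + v * t := by
    refine fun t ht => le_of_deriv_le_of_le_left hg
      (fun s => (hasDerivAt_quadratic a_up v s).differentiableAt) (by simp [hg0])
      (fun s hs => ?_) ht
    rw [(hasDerivAt_quadratic a_up v s).deriv]
    exact (hg' s hs.le).trans (min_le_left _ _)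
  have hlin : ∀ t, T ≤ t → g t ≤ v_up * t - (v_up - v) ^ 2 / (2 * a_up) := by
    have hT : 0 ≤ T := div_nonneg (sub_nonneg.mpr hv) ha.le
    refine fun t ht => le_of_deriv_le_of_le_left hg
      (fun s => (hasDerivAt_affine _ _ s).differentiableAt) ?_ (fun s hs => ?_) ht
    · rw [← quadratic_eq_linear_at_switch ha.ne']
      exact hquad T hT
    · rw [(hasDerivAt_affine _ _ s).deriv]
      exact (hg' s (hT.trans hs.le)).trans (min_le_right _ _)
  intro t ht
  rw [hUdef]
  split_ifs with h
  · exact hquad t ht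
  · exact hlin t (not_lt.mp h)
end

section
/- Loop invariance of the safe region under advisory compliance: suppose L(r, h, v) := ∀ t ≥ 0, |r - r_v·t| > r_p ∨ h_n(t; v) - h > h_p holds, where h_n(t; v) is the nominal altitude starting at velocity v with v ≤ v_lo. Then after time τ ≥ 0 of minimally-compliant flight (new state r' = r - r_v·τ, h' = h - h_n(τ; v), v' = min(v + a_lo·τ, v_lo)), the region L(r', h', v') holds again, because h_n(t; v') + h_n(τ; v) = h_n(t + τ; v) for all t ≥ 0. -/
/-! The nominal trajectory is a flow: flying `τ + t` from velocity `u` is flying `τ` and then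
`t` from the velocity reached at time `τ`, which is `min (u + a τ) v_lo`. Hence the state after
`τ` seconds of compliant flight sees, at every future time `t`, exactly the separation the
original state saw at time `τ + t`, and the invariant `L` is inherited. -/

noncomputable def nominalAltitude (a vlo t u : ℝ) : ℝ :=
  if t ≤ (vlo - u) / a then a / 2 * t ^ 2 + u * t else vlo * t - (vlo - u) ^ 2 / (2 * a)

namespace nominalAltitude

variable {a vlo t τ u : ℝ}

theorem of_le (h : t ≤ (vlo - u) / a) : nominalAltitude a vlo t u = a / 2 * t ^ 2 + u * t :=
  if_pos h

theorem of_lt (h : (vlo - u) / a < t) :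
    nominalAltitude a vlo t u = vlo * t - (vlo - u) ^ 2 / (2 * a) :=
  if_neg h.not_ge

theorem at_target (ht : 0 ≤ t) : nominalAltitude a vlo t vlo = vlo * t := by
  rcases ht.eq_or_lt with rfl | ht
  · simp [nominalAltitude]
  · simp [of_lt (show (vlo - vlo) / a < t by simpa using ht)]

theorem add_of_le (ha : 0 < a) (hτ : u + a * τ ≤ vlo) :
    nominalAltitude a vlo (τ + t) u =
      nominalAltitude a vlo τ u + nominalAltitude a vlo t (u + a * τ) := by
  have hswitch : (vlo - (u + a * τ)) / a = (vlo - u) / a - τ := by field_simp; ring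
  have hτ' : τ ≤ (vlo - u) / a := (le_div_iff₀ ha).2 (by linarith)
  rw [of_le hτ', nominalAltitude, nominalAltitude, hswitch]
  by_cases hcase : τ + t ≤ (vlo - u) / a
  · rw [if_pos hcase, if_pos (by linarith)]; ring
  · rw [if_neg hcase, if_neg (by linarith)]; field_simp; ring

theorem add_of_lt (ha : 0 < a) (ht : 0 ≤ t) (hτ : vlo < u + a * τ) :
    nominalAltitude a vlo (τ + t) u =
      nominalAltitude a vlo τ u + nominalAltitude a vlo t vlo := by
  have hτ' : (vlo - u) / a < τ := (div_lt_iff₀ ha).2 (by linarith)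
  rw [of_lt hτ', of_lt (by linarith), at_target ht]
  ring

theorem add (ha : 0 < a) (ht : 0 ≤ t) :
    nominalAltitude a vlo (τ + t) u =
      nominalAltitude a vlo τ u + nominalAltitude a vlo t (min (u + a * τ) vlo) := by
  rcases le_or_gt (u + a * τ) vlo with hτ | hτ
  · rw [min_eq_left hτ, add_of_le ha hτ]
  · rw [min_eq_right hτ.le, add_of_lt ha ht hτ]

end nominalAltitude

theorem stmt14_general (r_p h_p r_v a_lo v v_lo r h τ : ℝ)
    (ha : 0 < a_lo) (hτ : 0 ≤ τ)
    (hn : ℝ → ℝ → ℝ)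
    (hndef : ∀ t u, hn t u = if t ≤ (v_lo - u) / a_lo then a_lo / 2 * t ^ 2 + u * t
                             else v_lo * t - (v_lo - u) ^ 2 / (2 * a_lo))
    (hL : ∀ t, 0 ≤ t → |r - r_v * t| > r_p ∨ hn t v - h > h_p) :
    ∀ t, 0 ≤ t →
      |(r - r_v * τ) - r_v * t| > r_p ∨
      hn t (min (v + a_lo * τ) v_lo) - (h - hn τ v) > h_p := by
  obtain rfl : hn = nominalAltitude a_lo v_lo := funext₂ hndef
  intro t ht
  rcases hL (τ + t) (by linarith) with hr | hh
  · left
    rwa [sub_sub, ← mul_add]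
  · right
    rw [nominalAltitude.add ha ht] at hh
    linarith

theorem stmt14 (r_p h_p r_v a_lo v v_lo r h τ : ℝ)
    (hrp : 0 ≤ r_p) (hhp : 0 < h_p) (hrv : 0 ≤ r_v) (ha : 0 < a_lo)
    (hv : v ≤ v_lo) (hτ : 0 ≤ τ)
    (hn : ℝ → ℝ → ℝ)
    (hndef : ∀ t u, hn t u = if t ≤ (v_lo - u) / a_lo then a_lo / 2 * t ^ 2 + u * t
                             else v_lo * t - (v_lo - u) ^ 2 / (2 * a_lo))
    (hL : ∀ t, 0 ≤ t → |r - r_v * t| > r_p ∨ hn t v - h > h_p) :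
    ∀ t, 0 ≤ t →
      |(r - r_v * τ) - r_v * t| > r_p ∨
      hn t (min (v + a_lo * τ) v_lo) - (h - hn τ v) > h_p :=
  stmt14_general r_p h_p r_v a_lo v v_lo r h τ ha hτ hn hndef hL
end
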